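/- For all real numbers x,t,a,b,c,r,v the following identity holds in G̃ (solution of the master equation for the subgroup H⁰): (x,0,0,t,0) ⋆ (a,b,c,r,v) = (0, h₂, h₃, 0, h₅) ⋆ (x+a, 0, 0, t+r, 0), where h₂ = b, h₃ = c + b(x+a), and h₅ = v + bt − c(x+a) − abx − (b/2)(x²+a²). In particular every element of G̃ lies in H⁰·{(x,0,0,t,0) : x,t ∈ ℝ}, so the coset space H⁰\G̃ is identified with ℝ² via H⁰(x,0,0,t,0) ↦ (x,t). -/
import Mathlib

noncomputable section

/-- The underlying set `ℝ⁵` of the group `G̃`. -/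
abbrev G5 : Type := ℝ × ℝ × ℝ × ℝ × ℝ

/-- Multiplication on `G̃`. -/
def gtmul (g₁ g₂ : G5) : G5 :=
  (g₁.1 + g₂.1, g₁.2.1 + g₂.2.1, g₁.2.2.1 + g₂.2.2.1 - g₁.2.1 * g₂.1,
   g₁.2.2.2.1 + g₂.2.2.2.1,
   g₁.2.2.2.2 + g₂.2.2.2.2 + g₁.2.2.1 * g₂.1 - (1 / 2) * g₁.2.1 * g₂.1 ^ 2
     + g₁.2.2.2.1 * g₂.2.1)

/-- The subgroup `H⁰ = {(0,y,z,0,v) : y,z,v ∈ ℝ} ⊆ G̃`. -/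
def H0 : Set G5 := {g : G5 | g.1 = 0 ∧ g.2.2.2.1 = 0}

/-- Solution of the master equation for the subgroup `H⁰`:
`(x,0,0,t,0) ⋆ (a,b,c,r,v) = (0,h₂,h₃,0,h₅) ⋆ (x+a,0,0,t+r,0)` with
`h₂ = b`, `h₃ = c+b(x+a)`, `h₅ = v+bt−c(x+a)−abx−(b/2)(x²+a²)`; in particular
every element of `G̃` lies in `H⁰·{(x,0,0,t,0)}`, identifying `H⁰\G̃ ≅ ℝ²`. -/
theorem stmt13 :
    (∀ x t a b c r v : ℝ,
      gtmul (x, (0 : ℝ), (0 : ℝ), t, (0 : ℝ)) (a, b, c, r, v) =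
        gtmul ((0 : ℝ), b, c + b * (x + a), (0 : ℝ),
            v + b * t - c * (x + a) - a * b * x - (b / 2) * (x ^ 2 + a ^ 2))
          (x + a, (0 : ℝ), (0 : ℝ), t + r, (0 : ℝ))) ∧
    (∀ g : G5, ∃ h ∈ H0, ∃ x t : ℝ,
      g = gtmul h (x, (0 : ℝ), (0 : ℝ), t, (0 : ℝ))) := by
  constructor
  · intro x t a b c r v
    simp only [gtmul, Prod.mk.injEq]
    refine ⟨by ring, by ring, by ring, by ring, by ring⟩
  · rintro ⟨a, b, c, r, v⟩
    refine ⟨(0, b, c + b * a, 0, v - (c + b * a) * a + (1/2) * b * a ^ 2),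
      ⟨rfl, rfl⟩, a, r, ?_⟩
    simp only [gtmul, Prod.mk.injEq]
    refine ⟨by ring, by ring, by ring, by ring, by ring⟩

end
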